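/- Let W ∈ L(H) be a positive operator and A, B ∈ L(H) operators with closed range such that ker B = ker(A*W), and let T be the shorted operator of W to range A. Then the following are equivalent: (i) T is the minimum, with respect to the minus order, of the set F = {(AXB − I)*W(AXB − I) : X ∈ L(H)} (i.e. T ∈ F and T ⁻≤ Y for all Y ∈ F); (ii) the pair (W, range A) is compatible; (iii) T is the minimum of F with respect to the Loewner order (i.e. T ∈ F and T ≤ Y for all Y ∈ F). -/

import Mathlib

open ContinuousLinearMap
open scoped ComplexInnerProductSpace

noncomputable section

variable {H : Type*} [NormedAddCommGroup H] [InnerProductSpace ℂ H] [CompleteSpace H]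

/-- `M(W,S)`: the set of operators `X` with `0 ≤ X ≤ W` (Loewner order) and `range X ⊆ S^⊥`. -/
def MSet (W : H →L[ℂ] H) (S : Submodule ℂ H) : Set (H →L[ℂ] H) :=
  {X | X.IsPositive ∧ (W - X).IsPositive ∧ LinearMap.range (X).toLinearMap ≤ Sᗮ}

/-- `T` is the shorted operator of `W` to `S`, i.e. the maximum of `M(W,S)` in the Loewner
order. -/
def IsShorted (W : H →L[ℂ] H) (S : Submodule ℂ H) (T : H →L[ℂ] H) : Prop :=
  T ∈ MSet W S ∧ ∀ X ∈ MSet W S, (T - X).IsPositive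

/-- The minus order: `A ⁻≤ B` iff there are bounded idempotents `P, Q` with `A = PB` and
`A* = QB*`. -/
def MinusLE (A B : H →L[ℂ] H) : Prop :=
  ∃ P Q : H →L[ℂ] H, IsIdempotentElem P ∧ IsIdempotentElem Q ∧
    A = P ∘L B ∧ adjoint A = Q ∘L adjoint B

/-- The pair `(W, N)` is compatible: there is a bounded idempotent `Q` with range `N` such that
`WQ` is selfadjoint. -/
def Compatible (W : H →L[ℂ] H) (N : Submodule ℂ H) : Prop :=
  ∃ Q : H →L[ℂ] H, IsIdempotentElem Q ∧ LinearMap.range (Q).toLinearMap = N ∧ IsSelfAdjoint (W ∘L Q)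

/-- `M⁻(W,S)`: operators `X` with `X ⁻≤ W`, `range X ⊆ S^⊥` and `range X* ⊆ S^⊥`. -/
def MMinusSet (W : H →L[ℂ] H) (S : Submodule ℂ H) : Set (H →L[ℂ] H) :=
  {X | MinusLE X W ∧ LinearMap.range (X).toLinearMap ≤ Sᗮ ∧ LinearMap.range (adjoint X).toLinearMap ≤ Sᗮ}

/-- `X₀` is a `W`-inverse of `M` in `R(C)`: for every `x`, `X₀ x` is a `W`-weighted least squares
solution of `M z = C x`. -/
def WInverseIn (W M C X₀ : H →L[ℂ] H) : Prop :=
  ∀ x z : H, (⟪W (M (X₀ x) - C x), M (X₀ x) - C x⟫).re ≤ (⟪W (M z - C x), M z - C x⟫).re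

/-- The left weighted star order `A ₋*_W≤ B`. -/
def LStarW (W A B : H →L[ℂ] H) : Prop :=
  LinearMap.range (B).toLinearMap = LinearMap.range (A).toLinearMap ⊔ LinearMap.range (B - A).toLinearMap ∧
  LinearMap.range (A).toLinearMap ⊓ LinearMap.range (B - A).toLinearMap = ⊥ ∧
  LinearMap.range (B - A).toLinearMap ≤ LinearMap.ker (adjoint A ∘L W).toLinearMap

/-- The right weighted star order `A ≤*_W B`. -/
def RStarW (W A B : H →L[ℂ] H) : Prop :=
  LinearMap.range (adjoint B).toLinearMap =
    LinearMap.range (adjoint A).toLinearMap ⊔ LinearMap.range (adjoint B - adjoint A).toLinearMap ∧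
  LinearMap.range (adjoint A).toLinearMap ⊓ LinearMap.range (adjoint B - adjoint A).toLinearMap = ⊥ ∧
  LinearMap.range (adjoint B - adjoint A).toLinearMap ≤ LinearMap.ker (A ∘L W).toLinearMap

/-- The weighted star order `A *_W≤ B`. -/
def StarW (W A B : H →L[ℂ] H) : Prop :=
  LStarW W A B ∧ RStarW W A B

/-!
A member `T` of `M(W, S)` vanishes on `S` and satisfies `⟨T x, x⟩ ≤ ⟨W (x - s), x - s⟩` for
`s ∈ S`; with `E = A X B`, which maps into `S = R(A)`, this makes `T` a Loewner lower bound of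
`F`. If `T = (E - 1)* W (E - 1)` lies in `F`, then `s = E x` minimises the quadratic form
`s ↦ ⟨W (x - s), x - s⟩` over `S`, so `W (x - E x) ⊥ S` and `H = S + W⁻¹(S^⊥)`; projecting onto
`S` along a closed complement inside `W⁻¹(S^⊥)` gives an idempotent `Q` with `W Q` selfadjoint.
Conversely, for such a `Q` the shorted operator is `W (1 - Q)`, the hypothesis on kernels gives
`B (1 - Q) = 0`, so `T = (1 - Q*) Y` for every `Y ∈ F`, and `T ∈ F` by factorising a suitable
idempotent onto `S` as `A X₀ B` through bounded inner inverses of `A` and `B`.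
-/

open RCLike

section InnerInverse

variable {𝕜 E F G K : Type*} [RCLike 𝕜]
  [NormedAddCommGroup E] [InnerProductSpace 𝕜 E] [CompleteSpace E]
  [NormedAddCommGroup F] [InnerProductSpace 𝕜 F] [CompleteSpace F]
  [NormedAddCommGroup G] [InnerProductSpace 𝕜 G] [CompleteSpace G]
  [NormedAddCommGroup K] [InnerProductSpace 𝕜 K] [CompleteSpace K]

theorem ContinuousLinearMap.exists_comp_comp_eq_self (f : E →L[𝕜] F)
    (hf : IsClosed (f.range : Set F)) : ∃ g : F →L[𝕜] E, f ∘L g ∘L f = f := by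
  set V := f.kerᗮ
  set f₀ := f ∘L V.subtypeL
  have hinj : Function.Injective f₀ := by
    refine (injective_iff_map_eq_zero f₀).mpr fun u hu => ?_
    have hu' : (u : E) ∈ f.ker ⊓ V := ⟨hu, u.2⟩
    rw [Submodule.inf_orthogonal_eq_bot] at hu'
    exact Subtype.ext hu'
  have hrange : f₀.range = f.range := by
    refine le_antisymm (LinearMap.range_comp_le_range _ _) ?_
    rintro _ ⟨x, rfl⟩
    refine ⟨⟨V.starProjection x, V.starProjection_apply_mem x⟩, ?_⟩
    have hx := V.sub_starProjection_mem_orthogonal x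
    rw [Submodule.orthogonal_orthogonal, LinearMap.mem_ker, map_sub, sub_eq_zero] at hx
    exact hx.symm
  have hf₀ : IsClosed (f₀.range : Set F) := hrange ▸ hf
  have : CompleteSpace f₀.range := hf₀.completeSpace_coe
  let e := f₀.equivRange hinj (by rwa [LinearMap.coe_range] at hf₀)
  refine ⟨V.subtypeL ∘L (e.symm : f₀.range →L[𝕜] V) ∘L f₀.range.orthogonalProjectionOnto,
    ext fun x => ?_⟩
  have hy : f x ∈ f₀.range := hrange ▸ LinearMap.mem_range_self _ x
  have h := congrArg Subtype.val (e.apply_symm_apply ⟨f x, hy⟩)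
  simp only [comp_apply, Submodule.orthogonalProjectionOnto_mem_subspace_eq_self ⟨f x, hy⟩]
  exact h

theorem ContinuousLinearMap.exists_comp_comp_eq {A : G →L[𝕜] K} {B : E →L[𝕜] F}
    {C : E →L[𝕜] K} (hA : IsClosed (A.range : Set K)) (hB : IsClosed (B.range : Set F))
    (hCA : C.range ≤ A.range) (hBC : B.ker ≤ C.ker) :
    ∃ X : F →L[𝕜] G, A ∘L X ∘L B = C := by
  obtain ⟨gA, hgA⟩ := A.exists_comp_comp_eq_self hA
  obtain ⟨gB, hgB⟩ := B.exists_comp_comp_eq_self hB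
  refine ⟨gA ∘L C ∘L gB, ext fun x => ?_⟩
  have hx : C (gB (B x)) = C x := by
    have h : gB (B x) - x ∈ B.ker := by
      rw [LinearMap.mem_ker, coe_coe, map_sub, sub_eq_zero]
      exact congr($hgB x)
    have := hBC h
    rwa [LinearMap.mem_ker, coe_coe, map_sub, sub_eq_zero] at this
  obtain ⟨y, hy⟩ := hCA ⟨x, rfl⟩
  have hAy : A (gA (A y)) = A y := congr($hgA y)
  simp only [coe_coe] at hy
  simp only [comp_apply, hx, ← hy, hAy]

end InnerInverse

theorem Submodule.isCompl_orthogonal_inf_inf {𝕜 E : Type*} [RCLike 𝕜] [NormedAddCommGroup E]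
    [InnerProductSpace 𝕜 E] {S K : Submodule 𝕜 E} [(S ⊓ K).HasOrthogonalProjection]
    (h : S ⊔ K = ⊤) : IsCompl S ((S ⊓ K)ᗮ ⊓ K) := by
  refine ⟨disjoint_iff.mpr ?_, codisjoint_iff.mpr ?_⟩
  · rw [← inf_orthogonal_eq_bot (S ⊓ K)]
    ac_rfl
  · rw [eq_top_iff, ← h]
    calc S ⊔ K = S ⊔ (S ⊓ K ⊔ (S ⊓ K)ᗮ ⊓ K) := by
          rw [sup_orthogonal_inf_of_hasOrthogonalProjection inf_le_right]
      _ ≤ S ⊔ (S ⊓ K)ᗮ ⊓ K :=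
          sup_le le_sup_left (sup_le (inf_le_left.trans le_sup_left) le_sup_right)

section StarRing

variable {R : Type*} [Ring R] [StarRing R] {w q e : R}

theorem star_mul_mul_eq_mul (hq : IsIdempotentElem q) (hwq : star q * w = w * q) :
    star q * w * q = w * q := by
  rw [hwq, mul_assoc, hq.eq]

theorem star_one_sub_mul_eq_mul_one_sub (hwq : star q * w = w * q) :
    star (1 - q) * w = w * (1 - q) := by
  rw [star_sub, star_one, sub_mul, hwq, one_mul, mul_sub, mul_one]

theorem star_one_sub_mul_mul_eq_self (hwq : w * q = 0) (hqw : star q * w = 0) :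
    star (1 - q) * w * (1 - q) = w := by
  rw [star_sub, star_one, sub_mul, one_mul, hqw, sub_zero, mul_sub, mul_one, hwq, sub_zero]

theorem one_sub_star_mul_star_sub_one_mul_mul_eq (hwq : star q * w = w * q)
    (heq : e * (1 - q) = 0) (hwe : w * (1 - q) * e = 0) :
    (1 - star q) * (star (e - 1) * (w * (e - 1))) = w * (1 - q) := by
  have h : (1 - star q) * star (e - 1) = -star (1 - q) := by
    rw [show (1 : R) - star q = star (1 - q) by rw [star_sub, star_one], ← star_mul, sub_one_mul,
      heq, zero_sub, star_neg]
  rw [← mul_assoc, h, neg_mul, ← mul_assoc, star_one_sub_mul_eq_mul_one_sub hwq, mul_sub_one, hwe,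
    zero_sub, neg_neg]

theorem star_sub_one_mul_mul_eq (hwe : w * e = w * q) (hwqe : w * (1 - q) * e = 0)
    (hwq : star (w * (1 - q)) = w * (1 - q)) :
    star (e - 1) * (w * (e - 1)) = w * (1 - q) := by
  have h : w * (e - 1) = -(w * (1 - q)) := by rw [mul_sub_one, hwe, mul_one_sub, neg_sub]
  rw [h, mul_neg, star_sub, star_one, sub_mul, one_mul, ← hwq, ← star_mul, hwqe, star_zero]
  noncomm_ring

end StarRing

section MSet

variable {W T : H →L[ℂ] H} {S : Submodule ℂ H}

theorem apply_eq_zero_of_mem_MSet (hT : T ∈ MSet W S) {s : H} (hs : s ∈ S) : T s = 0 := by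
  have hs' : s ∈ T.rangeᗮ :=
    Submodule.orthogonal_le hT.2.2 (Submodule.le_orthogonal_orthogonal S hs)
  rwa [orthogonal_range, hT.1.isSelfAdjoint.adjoint_eq] at hs'

theorem re_inner_le_of_mem_MSet (hT : T ∈ MSet W S) (x : H) {s : H} (hs : s ∈ S) :
    re ⟪T x, x⟫ ≤ re ⟪W (x - s), x - s⟫ := by
  have hTx : ⟪T x, s⟫ = 0 := Submodule.inner_left_of_mem_orthogonal hs (hT.2.2 ⟨x, rfl⟩)
  have hshift : ⟪T (x - s), x - s⟫ = ⟪T x, x⟫ := by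
    rw [map_sub, apply_eq_zero_of_mem_MSet hT hs, sub_zero, inner_sub_right, hTx, sub_zero]
  have h := hT.2.1.re_inner_nonneg_left (x - s)
  rw [sub_apply, inner_sub_left, hshift, map_sub] at h
  linarith

theorem inner_adjoint_sub_one_comp_apply (W E : H →L[ℂ] H) (x : H) :
    ⟪(adjoint (E - 1) ∘L (W ∘L (E - 1))) x, x⟫ = ⟪W (x - E x), x - E x⟫ := by
  rw [comp_apply, comp_apply, adjoint_inner_left, ← inner_neg_neg, ← map_neg]
  simp only [sub_apply, one_apply_eq_self, neg_sub]

theorem le_adjoint_sub_one_comp_of_mem_MSet (hT : T ∈ MSet W S) (hW : IsSelfAdjoint W)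
    {E : H →L[ℂ] H} (hE : ∀ x, E x ∈ S) : T ≤ adjoint (E - 1) ∘L (W ∘L (E - 1)) := by
  refine (le_def _ _).mpr (isPositive_def'.mpr
    ⟨(hW.adjoint_conj _).sub hT.1.isSelfAdjoint, fun x => ?_⟩)
  have h := re_inner_le_of_mem_MSet hT x (hE x)
  rw [reApplyInnerSelf_apply, sub_apply, inner_sub_left, inner_adjoint_sub_one_comp_apply]
  simp only [map_sub] at h ⊢
  linarith

end MSet

section Variational

variable {W : H →L[ℂ] H}

theorem re_inner_eq_zero_of_forall_re_inner_le (hW : IsSelfAdjoint W) {v s : H}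
    (h : ∀ t : ℝ, re ⟪W v, v⟫ ≤ re ⟪W (v + (t : ℂ) • s), v + (t : ℂ) • s⟫) :
    re ⟪s, W v⟫ = 0 := by
  have hquad : ∀ t : ℝ, 0 ≤ re ⟪W s, s⟫ * (t * t) + 2 * re ⟪s, W v⟫ * t + 0 := by
    intro t
    have ht := h t
    have h1 : re ⟪W s, v⟫ = re ⟪s, W v⟫ := congrArg re (hW.isSymmetric s v)
    have h2 : re ⟪W v, s⟫ = re ⟪s, W v⟫ := inner_re_symm _ _
    simp only [map_add, map_smul, inner_add_left, inner_add_right, inner_smul_left,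
      inner_smul_right, Complex.conj_ofReal] at ht
    simp only [RCLike.re_to_complex, Complex.add_re, Complex.mul_re,
      Complex.ofReal_re, Complex.ofReal_im, zero_mul, sub_zero] at ht h1 h2 ⊢
    rw [h1, h2] at ht
    linarith
  have hd := discrim_le_zero hquad
  rw [discrim] at hd
  nlinarith [sq_nonneg (re ⟪s, W v⟫)]

theorem mem_orthogonal_of_forall_re_inner_le (hW : IsSelfAdjoint W) {S : Submodule ℂ H} {v : H}
    (h : ∀ s ∈ S, re ⟪W v, v⟫ ≤ re ⟪W (v + s), v + s⟫) : W v ∈ Sᗮ := by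
  refine (Submodule.mem_orthogonal _ _).mpr fun s hs => Complex.ext ?_ ?_
  · exact re_inner_eq_zero_of_forall_re_inner_le hW fun t => h _ (S.smul_mem _ hs)
  · have := re_inner_eq_zero_of_forall_re_inner_le hW (s := Complex.I • s)
      fun t => h _ (S.smul_mem _ (S.smul_mem _ hs))
    simpa [inner_smul_left] using this

theorem apply_sub_mem_orthogonal_of_eq_adjoint_sub_one_comp {T : H →L[ℂ] H} {S : Submodule ℂ H}
    (hT : T ∈ MSet W S) (hW : IsSelfAdjoint W) {E : H →L[ℂ] H} (hE : ∀ x, E x ∈ S)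
    (hTE : T = adjoint (E - 1) ∘L (W ∘L (E - 1))) (x : H) : W (x - E x) ∈ Sᗮ := by
  refine mem_orthogonal_of_forall_re_inner_le hW fun s hs => ?_
  have h := re_inner_le_of_mem_MSet hT x (S.sub_mem (hE x) hs)
  rwa [hTE, inner_adjoint_sub_one_comp_apply, sub_sub_eq_add_sub, ← sub_add_eq_add_sub] at h

end Variational

section Compatible

variable {W Q : H →L[ℂ] H}

theorem isSelfAdjoint_comp_of_apply_sub_mem_orthogonal (hW : IsSelfAdjoint W)
    (h : ∀ x, W (x - Q x) ∈ (LinearMap.range Q.toLinearMap)ᗮ) : IsSelfAdjoint (W ∘L Q) := by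
  refine isSelfAdjoint_iff_isSymmetric.mpr fun x y => ?_
  have hx : ⟪Q x, W (y - Q y)⟫ = 0 :=
    Submodule.inner_right_of_mem_orthogonal (LinearMap.mem_range_self _ x) (h y)
  have hy : ⟪W (x - Q x), Q y⟫ = 0 :=
    Submodule.inner_left_of_mem_orthogonal (LinearMap.mem_range_self _ y) (h x)
  rw [map_sub, inner_sub_right, sub_eq_zero] at hx
  rw [map_sub, inner_sub_left, sub_eq_zero] at hy
  have hsym : ∀ u v, ⟪W u, v⟫ = ⟪u, W v⟫ := hW.isSymmetric
  change ⟪W (Q x), y⟫ = ⟪x, W (Q y)⟫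
  rw [hsym, hx, ← hsym, ← hy, hsym]

theorem compatible_of_sup_comap_orthogonal_eq_top {S : Submodule ℂ H} (hW : IsSelfAdjoint W)
    (hS : IsClosed (S : Set H)) (h : S ⊔ Sᗮ.comap W.toLinearMap = ⊤) : Compatible W S := by
  set K := Sᗮ.comap W.toLinearMap
  have hK : IsClosed (K : Set H) := S.isClosed_orthogonal.preimage W.continuous
  have : CompleteSpace ↥(S ⊓ K) := (hS.inter hK).completeSpace_coe
  have hcompl := Submodule.IsCompl.isTopCompl_of_isClosed (Submodule.isCompl_orthogonal_inf_inf h)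
    hS ((S ⊓ K).isClosed_orthogonal.inter hK)
  refine ⟨S.projectionL _ hcompl, Submodule.isIdempotentElem_projectionL hcompl,
    Submodule.range_projectionL hcompl,
    isSelfAdjoint_comp_of_apply_sub_mem_orthogonal hW fun x => ?_⟩
  rw [Submodule.range_projectionL hcompl, ← Submodule.projectionL_eq_self_sub_projectionL]
  exact (Submodule.projectionL_apply_mem hcompl.symm x).2

theorem star_mul_eq_mul_of_isSelfAdjoint_comp (hW : IsSelfAdjoint W)
    (hWQ : IsSelfAdjoint (W ∘L Q)) : star Q * W = W * Q := by
  simpa [adjoint_comp, hW.adjoint_eq, star_eq_adjoint, mul_def] using hWQ.adjoint_eq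

theorem comp_one_sub_mem_MSet (hW : W.IsPositive) (hQ : IsIdempotentElem Q)
    (hWQ : IsSelfAdjoint (W ∘L Q)) : W ∘L (1 - Q) ∈ MSet W (LinearMap.range Q.toLinearMap) := by
  have hwq := star_mul_eq_mul_of_isSelfAdjoint_comp hW.isSelfAdjoint hWQ
  have hW0 : 0 ≤ W := (nonneg_iff_isPositive W).mpr hW
  refine ⟨?_, ?_, ?_⟩
  · rw [← nonneg_iff_isPositive, ← mul_def,
      ← star_mul_mul_eq_mul hQ.one_sub (star_one_sub_mul_eq_mul_one_sub hwq)]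
    exact star_left_conjugate_nonneg hW0 _
  · have h : W - W * (1 - Q) = star Q * W * Q := by
      rw [star_mul_mul_eq_mul hQ hwq, mul_sub, mul_one, sub_sub_cancel]
    rw [← nonneg_iff_isPositive, ← mul_def, h]
    exact star_left_conjugate_nonneg hW0 _
  · rintro _ ⟨x, rfl⟩
    rw [orthogonal_range, LinearMap.mem_ker, ← star_eq_adjoint]
    change (star Q * W * (1 - Q)) x = 0
    rw [hwq, mul_assoc, hQ.mul_one_sub_self, mul_zero, zero_apply]

theorem le_comp_one_sub_of_mem_MSet (hW : IsSelfAdjoint W) (hQ : IsIdempotentElem Q)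
    (hWQ : IsSelfAdjoint (W ∘L Q)) {X : H →L[ℂ] H}
    (hX : X ∈ MSet W (LinearMap.range Q.toLinearMap)) : X ≤ W ∘L (1 - Q) := by
  have hxq : X * Q = 0 := ext fun x => apply_eq_zero_of_mem_MSet hX (LinearMap.mem_range_self _ x)
  have hqx : star Q * X = 0 := by
    rw [← hX.1.isSelfAdjoint.star_eq, ← star_mul, hxq, star_zero]
  rw [← star_one_sub_mul_mul_eq_self hxq hqx, ← mul_def, ← star_mul_mul_eq_mul hQ.one_sub
    (star_one_sub_mul_eq_mul_one_sub (star_mul_eq_mul_of_isSelfAdjoint_comp hW hWQ))]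
  exact star_left_conjugate_le_conjugate hX.2.1 _

theorem IsShorted.eq_comp_one_sub {T : H →L[ℂ] H} (hW : W.IsPositive) (hQ : IsIdempotentElem Q)
    (hWQ : IsSelfAdjoint (W ∘L Q)) (hT : IsShorted W (LinearMap.range Q.toLinearMap) T) :
    T = W ∘L (1 - Q) :=
  le_antisymm (le_comp_one_sub_of_mem_MSet hW.isSelfAdjoint hQ hWQ hT.1)
    (hT.2 _ (comp_one_sub_mem_MSet hW hQ hWQ))

theorem comp_one_sub_eq_zero_of_ker_le (hW : W.IsPositive) (hQ : IsIdempotentElem Q)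
    (hWQ : IsSelfAdjoint (W ∘L Q)) {A B : H →L[ℂ] H}
    (hrange : LinearMap.range Q.toLinearMap = LinearMap.range A.toLinearMap)
    (hker : LinearMap.ker (adjoint A ∘L W).toLinearMap ≤ LinearMap.ker B.toLinearMap) :
    B ∘L (1 - Q) = 0 := by
  refine ext fun x => hker ?_
  have hx := (comp_one_sub_mem_MSet hW hQ hWQ).2.2 ⟨x, rfl⟩
  rwa [hrange, orthogonal_range] at hx

theorem minusLE_comp_one_sub (hW : W.IsPositive) (hQ : IsIdempotentElem Q)
    (hWQ : IsSelfAdjoint (W ∘L Q)) {E : H →L[ℂ] H} (hEQ : E ∘L (1 - Q) = 0)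
    (hE : (W ∘L (1 - Q)) ∘L E = 0) :
    MinusLE (W ∘L (1 - Q)) (adjoint (E - 1) ∘L (W ∘L (E - 1))) := by
  have key := one_sub_star_mul_star_sub_one_mul_mul_eq
    (star_mul_eq_mul_of_isSelfAdjoint_comp hW.isSelfAdjoint hWQ) hEQ hE
  have hP : IsIdempotentElem (1 - star Q) := hQ.star.one_sub
  refine ⟨1 - star Q, 1 - star Q, hP, hP, key.symm, ?_⟩
  rw [(comp_one_sub_mem_MSet hW hQ hWQ).1.isSelfAdjoint.adjoint_eq,
    (hW.isSelfAdjoint.adjoint_conj _).adjoint_eq]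
  exact key.symm

theorem exists_comp_one_sub_eq_adjoint_sub_one_comp (hW : W.IsPositive) {A B : H →L[ℂ] H}
    (hA : IsClosed (LinearMap.range A.toLinearMap : Set H))
    (hB : IsClosed (LinearMap.range B.toLinearMap : Set H))
    (hker : LinearMap.ker B.toLinearMap ≤ LinearMap.ker (adjoint A ∘L W).toLinearMap)
    (hQ : IsIdempotentElem Q)
    (hrange : LinearMap.range Q.toLinearMap = LinearMap.range A.toLinearMap)
    (hWQ : IsSelfAdjoint (W ∘L Q)) :
    ∃ X₀ : H →L[ℂ] H, W ∘L (1 - Q) = adjoint (A ∘L X₀ ∘L B - 1) ∘L (W ∘L (A ∘L X₀ ∘L B - 1)) := by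
  -- Removing the part of `Q` in `R(A) ⊓ ker W` keeps `W Q' = W Q` and makes `Q'` vanish on `ker B`.
  set N := LinearMap.range A.toLinearMap ⊓ LinearMap.ker W.toLinearMap
  have : CompleteSpace N := (hA.inter W.isClosed_ker).completeSpace_coe
  set Q' := (1 - N.starProjection) * Q
  have hWQ' : W * Q' = W * Q := by
    have hWP : W * N.starProjection = 0 := ext fun x => (N.starProjection_apply_mem x).2
    rw [← mul_assoc, mul_sub, mul_one, hWP, sub_zero]
  have hQ'A : LinearMap.range Q'.toLinearMap ≤ LinearMap.range A.toLinearMap := by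
    rintro _ ⟨x, rfl⟩
    refine (LinearMap.range A.toLinearMap).sub_mem ?_ (N.starProjection_apply_mem _).1
    exact hrange ▸ LinearMap.mem_range_self _ x
  have hBQ' : LinearMap.ker B.toLinearMap ≤ LinearMap.ker Q'.toLinearMap := by
    intro x hx
    have hWx : W x ∈ LinearMap.ker (adjoint Q).toLinearMap := by
      rw [← orthogonal_range, hrange, orthogonal_range]
      exact hker hx
    have hQx : Q x ∈ N := ⟨hrange ▸ LinearMap.mem_range_self _ x,
      (congr($(star_mul_eq_mul_of_isSelfAdjoint_comp hW.isSelfAdjoint hWQ) x)).symm.trans hWx⟩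
    simp [Q', N.starProjection_eq_self_iff.mpr hQx]
  obtain ⟨X₀, hX₀⟩ := ContinuousLinearMap.exists_comp_comp_eq hA hB hQ'A hBQ'
  refine ⟨X₀, (star_sub_one_mul_mul_eq (hX₀ ▸ hWQ') ?_ ?_).symm⟩
  · have h1Q : (1 - Q) * Q' = 0 := ext fun x => by
      obtain ⟨y, hy⟩ := hrange ▸ hQ'A ⟨x, rfl⟩
      change Q y = Q' x at hy
      change Q' x - Q (Q' x) = 0
      rw [← hy, sub_eq_zero]
      exact congr($(hQ.eq) y).symm
    rw [hX₀, mul_assoc, h1Q, mul_zero]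
  · exact (comp_one_sub_mem_MSet hW hQ hWQ).1.isSelfAdjoint.star_eq

end Compatible

/-- equivalence of (i) `T` is the minus-order minimum of
`{(AXB - I)* W (AXB - I)}`; (ii) `(W, range A)` compatible; (iii) `T` is the Loewner
minimum of the same set. -/
theorem stmt11 (W A B T : H →L[ℂ] H) (hW : W.IsPositive)
    (hA : IsClosed (LinearMap.range (A).toLinearMap : Set H)) (hB : IsClosed (LinearMap.range (B).toLinearMap : Set H))
    (hker : LinearMap.ker (B).toLinearMap = LinearMap.ker (adjoint A ∘L W).toLinearMap)
    (hT : IsShorted W (LinearMap.range (A).toLinearMap) T) :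
    [(∃ X₀ : H →L[ℂ] H, T = adjoint (A ∘L X₀ ∘L B - 1) ∘L (W ∘L (A ∘L X₀ ∘L B - 1))) ∧
       ∀ X : H →L[ℂ] H,
         MinusLE T (adjoint (A ∘L X ∘L B - 1) ∘L (W ∘L (A ∘L X ∘L B - 1))),
     Compatible W (LinearMap.range (A).toLinearMap),
     (∃ X₀ : H →L[ℂ] H, T = adjoint (A ∘L X₀ ∘L B - 1) ∘L (W ∘L (A ∘L X₀ ∘L B - 1))) ∧
       ∀ X : H →L[ℂ] H,
         ((adjoint (A ∘L X ∘L B - 1) ∘L (W ∘L (A ∘L X ∘L B - 1))) - T).IsPositive].TFAE := by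
  have hE : ∀ X x, (A ∘L X ∘L B) x ∈ LinearMap.range A.toLinearMap := fun X x => ⟨X (B x), rfl⟩
  tfae_have 1 → 3 := fun ⟨hex, _⟩ =>
    ⟨hex, fun X => le_adjoint_sub_one_comp_of_mem_MSet hT.1 hW.isSelfAdjoint (hE X)⟩
  tfae_have 3 → 2 := by
    rintro ⟨⟨X₀, hX₀⟩, -⟩
    refine compatible_of_sup_comap_orthogonal_eq_top hW.isSelfAdjoint hA
      (eq_top_iff.mpr fun x _ => Submodule.mem_sup.mpr ⟨_, hE X₀ x, _, ?_, add_sub_cancel _ x⟩)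
    exact apply_sub_mem_orthogonal_of_eq_adjoint_sub_one_comp hT.1 hW.isSelfAdjoint (hE X₀) hX₀ x
  tfae_have 2 → 1 := by
    rintro ⟨Q, hQ, hrange, hWQ⟩
    have hTQ := IsShorted.eq_comp_one_sub hW hQ hWQ (hrange ▸ hT)
    obtain ⟨X₀, hX₀⟩ := exists_comp_one_sub_eq_adjoint_sub_one_comp hW hA hB hker.le hQ hrange hWQ
    have hBQ := comp_one_sub_eq_zero_of_ker_le hW hQ hWQ hrange hker.ge
    have hTA : T ∘L A = 0 := ext fun x => apply_eq_zero_of_mem_MSet hT.1 ⟨x, rfl⟩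
    refine ⟨⟨X₀, hTQ.trans hX₀⟩, fun X => hTQ ▸ minusLE_comp_one_sub hW hQ hWQ ?_ ?_⟩
    · simp only [comp_assoc, hBQ, comp_zero]
    · rw [← hTQ, ← comp_assoc, hTA, zero_comp]
  tfae_finish
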